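/- arXiv:1505.03250 — 3 statements merged into one kernel-verified Lean document; each statement's English description precedes it below -/
import Mathlib

section
/- (Heavy-tail case, d = 1.) Fix Δt > 0, β ∈ (1,3), α = β − 1, M(v) = m/(1+|v|^β), ν ≡ 1, and k ≠ 0. Then as ε → 0, the quantity I(ε) = ε^{2−α} ∫_ℝ λ²(kv)²/(1 + ε²λ²(kv)²) M(v) dv, where λ = Δt/(ε^α + Δt), converges to κ|k|^α with κ = ∫_ℝ (m/|v|^β) v²/(1+v²) dv. -/
open MeasureTheory Filter
open Set

lemma bnd_integrable {m β : ℝ} (hβ1 : 1 < β) (hβ3 : β < 3) :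
    Integrable (fun w : ℝ => m / |w| ^ β * (w ^ 2 / (1 + w ^ 2))) := by
  have hmeas : Measurable (fun w : ℝ => m / |w| ^ β * (w ^ 2 / (1 + w ^ 2))) := by
    fun_prop
  have habs : ∀ w : ℝ, 0 < w →
      ‖m / |w| ^ β * (w ^ 2 / (1 + w ^ 2))‖ = |m| / w ^ β * (w ^ 2 / (1 + w ^ 2)) := by
    intro w hw0
    have hwb : (0:ℝ) < w ^ β := Real.rpow_pos_of_pos hw0 β
    rw [Real.norm_eq_abs, abs_of_pos hw0, abs_mul, abs_div, abs_of_pos hwb,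
      abs_of_nonneg (by positivity : (0:ℝ) ≤ w ^ 2 / (1 + w ^ 2))]
  have hIoi : IntegrableOn (fun w : ℝ => m / |w| ^ β * (w ^ 2 / (1 + w ^ 2))) (Ioi 0) := by
    rw [← Ioc_union_Ioi_eq_Ioi (zero_le_one (α := ℝ))]
    apply IntegrableOn.union
    · have hint : IntegrableOn (fun w : ℝ => |m| * w ^ (2 - β)) (Ioc 0 1) := by
        apply Integrable.const_mul
        have := (intervalIntegral.intervalIntegrable_rpow' (a := 0) (b := 1) (r := 2 - β)
          (by linarith))
        rwa [intervalIntegrable_iff, uIoc_of_le zero_le_one] at this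
      apply Integrable.mono hint (hmeas.aestronglyMeasurable.restrict)
      filter_upwards [ae_restrict_mem measurableSet_Ioc] with w hw
      have hw0 : 0 < w := hw.1
      rw [habs w hw0, Real.norm_eq_abs,
        abs_of_nonneg (by positivity : (0:ℝ) ≤ |m| * w ^ (2 - β))]
      have h1 : w ^ 2 / (1 + w ^ 2) ≤ w ^ 2 := by
        rw [div_le_iff₀ (by positivity)]
        nlinarith [sq_nonneg w]
      calc |m| / w ^ β * (w ^ 2 / (1 + w ^ 2)) ≤ |m| / w ^ β * w ^ 2 := by
            apply mul_le_mul_of_nonneg_left h1 (by positivity)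
        _ = |m| * w ^ (2 - β) := by
            rw [Real.rpow_sub hw0, show ((2:ℝ)) = ((2:ℕ):ℝ) by norm_num, Real.rpow_natCast]
            ring
    · have hint : IntegrableOn (fun w : ℝ => |m| * w ^ (-β)) (Ioi 1) :=
        (integrableOn_Ioi_rpow_of_lt (by linarith) one_pos).const_mul _
      apply Integrable.mono hint (hmeas.aestronglyMeasurable.restrict)
      filter_upwards [ae_restrict_mem measurableSet_Ioi] with w hw
      have hw0 : (0:ℝ) < w := lt_trans one_pos hw
      rw [habs w hw0, Real.norm_eq_abs,
        abs_of_nonneg (by positivity : (0:ℝ) ≤ |m| * w ^ (-β))]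
      have h1 : w ^ 2 / (1 + w ^ 2) ≤ 1 := by
        rw [div_le_one (by positivity)]; nlinarith
      calc |m| / w ^ β * (w ^ 2 / (1 + w ^ 2)) ≤ |m| / w ^ β * 1 := by
            apply mul_le_mul_of_nonneg_left h1 (by positivity)
        _ = |m| * w ^ (-β) := by
            rw [mul_one, Real.rpow_neg hw0.le, div_eq_mul_inv]
  rw [← integrableOn_univ, ← @Iio_union_Ici _ _ (0 : ℝ), integrableOn_union,
    integrableOn_Ici_iff_integrableOn_Ioi]
  refine ⟨?_, hIoi⟩
  rw [← (Measure.measurePreserving_neg (volume : Measure ℝ)).integrableOn_comp_preimage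
      (Homeomorph.neg ℝ).measurableEmbedding]
  simp only [Function.comp_def, neg_preimage, neg_Iio, neg_neg, neg_zero, abs_neg, neg_sq]
  exact hIoi

lemma tendsto_G {m β : ℝ} (hβ1 : 1 < β) (hβ3 : β < 3) :
    Tendsto (fun c : ℝ => ∫ w : ℝ, m / (c ^ β + |w| ^ β) * (w ^ 2 / (1 + w ^ 2)))
      (nhdsWithin 0 (Set.Ioi 0))
      (nhds (∫ w : ℝ, m / |w| ^ β * (w ^ 2 / (1 + w ^ 2)))) := by
  have hβ0 : 0 < β := by linarith
  have hae : ∀ᵐ w : ℝ, w ≠ 0 := by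
    simpa [ae_iff] using measure_singleton (0 : ℝ)
  apply tendsto_integral_filter_of_dominated_convergence
    (fun w : ℝ => |m| / |w| ^ β * (w ^ 2 / (1 + w ^ 2)))
  · filter_upwards with c
    apply Measurable.aestronglyMeasurable
    fun_prop
  · filter_upwards [self_mem_nhdsWithin] with c hc
    filter_upwards [hae] with w hw
    have hc0 : (0:ℝ) < c := hc
    have hwb : (0:ℝ) < |w| ^ β := Real.rpow_pos_of_pos (abs_pos.2 hw) β
    have hcb : (0:ℝ) < c ^ β := Real.rpow_pos_of_pos hc0 β
    rw [Real.norm_eq_abs, abs_mul, abs_div, abs_of_pos (by positivity : (0:ℝ) < c ^ β + |w| ^ β),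
      abs_of_nonneg (by positivity : (0:ℝ) ≤ w ^ 2 / (1 + w ^ 2))]
    apply mul_le_mul_of_nonneg_right _ (by positivity)
    apply div_le_div_of_nonneg_left (abs_nonneg m) hwb (by linarith)
  · exact bnd_integrable hβ1 hβ3
  · filter_upwards [hae] with w hw
    have hwb : (0:ℝ) < |w| ^ β := Real.rpow_pos_of_pos (abs_pos.2 hw) β
    have h1 : Tendsto (fun c : ℝ => c ^ β) (nhdsWithin 0 (Set.Ioi 0)) (nhds 0) := by
      have := (Real.continuousAt_rpow_const 0 β (Or.inr hβ0.le)).tendsto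
      rw [Real.zero_rpow hβ0.ne'] at this
      exact this.mono_left nhdsWithin_le_nhds
    have h2 : Tendsto (fun c : ℝ => c ^ β + |w| ^ β) (nhdsWithin 0 (Set.Ioi 0))
        (nhds (|w| ^ β)) := by
      simpa using h1.add_const (|w| ^ β)
    exact (tendsto_const_nhds.div h2 hwb.ne').mul_const _

/-- Heavy-tail case in dimension one: the symbol
`I(ε) = ε^{2−α} ∫ λ²(kv)²/(1+ε²λ²(kv)²) M(v) dv`, with
`λ = Δt/(ε^α+Δt)`, `α = β−1`, `M(v) = m/(1+|v|^β)`, converges to `κ|k|^α`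
as `ε → 0⁺`, where `κ = ∫ (m/|v|^β) v²/(1+v²) dv`. -/
theorem symbol_I_limit_heavy_tail
    (Δt m : ℝ) (hΔt : 0 < Δt) (hm : 0 < m)
    (β : ℝ) (hβ : β ∈ Set.Ioo (1 : ℝ) 3) (k : ℝ) (hk : k ≠ 0) :
    Tendsto
      (fun ε : ℝ =>
        ε ^ (2 - (β - 1)) *
          ∫ v : ℝ,
            (Δt / (ε ^ (β - 1) + Δt)) ^ 2 * (k * v) ^ 2 /
              (1 + ε ^ 2 * (Δt / (ε ^ (β - 1) + Δt)) ^ 2 * (k * v) ^ 2) *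
              (m / (1 + |v| ^ β)))
      (nhdsWithin 0 (Set.Ioi 0))
      (nhds ((∫ v : ℝ, m / |v| ^ β * (v ^ 2 / (1 + v ^ 2))) * |k| ^ (β - 1))) := by
  obtain ⟨hβ1, hβ3⟩ := hβ
  have hα : (0:ℝ) < β - 1 := by linarith
  have hk0 : (0:ℝ) < |k| := abs_pos.2 hk
  -- ε ↦ ε^(β-1) tends to 0 on the right
  have hrp : Tendsto (fun ε : ℝ => ε ^ (β - 1)) (nhdsWithin 0 (Set.Ioi 0)) (nhds 0) := by
    have := (Real.continuousAt_rpow_const 0 (β - 1) (Or.inr hα.le)).tendsto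
    rw [Real.zero_rpow hα.ne'] at this
    exact this.mono_left nhdsWithin_le_nhds
  have hden : Tendsto (fun ε : ℝ => ε ^ (β - 1) + Δt) (nhdsWithin 0 (Set.Ioi 0)) (nhds Δt) := by
    simpa using hrp.add_const Δt
  have hlam : Tendsto (fun ε : ℝ => Δt / (ε ^ (β - 1) + Δt)) (nhdsWithin 0 (Set.Ioi 0))
      (nhds 1) := by
    have h : Tendsto (fun ε : ℝ => Δt / (ε ^ (β - 1) + Δt)) (nhdsWithin 0 (Set.Ioi 0))
        (nhds (Δt / Δt)) := tendsto_const_nhds.div hden hΔt.ne'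
    rwa [div_self hΔt.ne'] at h
  have hlamk : Tendsto (fun ε : ℝ => Δt / (ε ^ (β - 1) + Δt) * |k|) (nhdsWithin 0 (Set.Ioi 0))
      (nhds (|k|)) := by
    simpa using hlam.mul_const (|k|)
  -- the prefactor
  have hPre : Tendsto (fun ε : ℝ => (Δt / (ε ^ (β - 1) + Δt) * |k|) ^ (β - 1))
      (nhdsWithin 0 (Set.Ioi 0)) (nhds (|k| ^ (β - 1))) :=
    ((Real.continuousAt_rpow_const (|k|) (β - 1) (Or.inl hk0.ne')).tendsto).comp hlamk
  -- the rescaled variable c(ε) = ε λ |k| tends to 0 on the right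
  have hid : Tendsto (fun ε : ℝ => ε) (nhdsWithin 0 (Set.Ioi 0)) (nhds 0) :=
    tendsto_id.mono_right nhdsWithin_le_nhds
  have hc : Tendsto (fun ε : ℝ => ε * (Δt / (ε ^ (β - 1) + Δt)) * |k|)
      (nhdsWithin 0 (Set.Ioi 0)) (nhdsWithin 0 (Set.Ioi 0)) := by
    rw [tendsto_nhdsWithin_iff]
    constructor
    · simpa using (hid.mul hlam).mul_const (|k|)
    · filter_upwards [self_mem_nhdsWithin] with ε hε
      have hε0 : (0:ℝ) < ε := hε
      have hl : (0:ℝ) < Δt / (ε ^ (β - 1) + Δt) := by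
        apply div_pos hΔt
        have := Real.rpow_pos_of_pos hε0 (β - 1)
        linarith
      exact mul_pos (mul_pos hε0 hl) hk0
  -- the integral part
  have hInt : Tendsto
      (fun ε : ℝ => ∫ w : ℝ,
        m / ((ε * (Δt / (ε ^ (β - 1) + Δt)) * |k|) ^ β + |w| ^ β) * (w ^ 2 / (1 + w ^ 2)))
      (nhdsWithin 0 (Set.Ioi 0))
      (nhds (∫ w : ℝ, m / |w| ^ β * (w ^ 2 / (1 + w ^ 2)))) :=
    (tendsto_G hβ1 hβ3).comp hc
  have hMul := hPre.mul hInt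
  rw [mul_comm] -- goal limit as |k|^(β-1) * κ
  apply hMul.congr'
  filter_upwards [self_mem_nhdsWithin] with ε hε
  have hε0 : (0:ℝ) < ε := hε
  set L : ℝ := Δt / (ε ^ (β - 1) + Δt) with hLdef
  have hL : (0:ℝ) < L := by
    apply div_pos hΔt
    have := Real.rpow_pos_of_pos hε0 (β - 1)
    linarith
  set c : ℝ := ε * L * |k| with hcdef
  have hc0 : (0:ℝ) < c := mul_pos (mul_pos hε0 hL) hk0
  have hcb : (0:ℝ) < c ^ β := Real.rpow_pos_of_pos hc0 β
  -- change of variables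
  have hfeq : ∀ v : ℝ,
      L ^ 2 * (k * v) ^ 2 / (1 + ε ^ 2 * L ^ 2 * (k * v) ^ 2) * (m / (1 + |v| ^ β)) =
      (fun w : ℝ => c ^ β / ε ^ 2 * (m / (c ^ β + |w| ^ β) * (w ^ 2 / (1 + w ^ 2)))) (c * v) := by
    intro v
    have h1 : |c * v| ^ β = c ^ β * |v| ^ β := by
      rw [abs_mul, abs_of_pos hc0, Real.mul_rpow hc0.le (abs_nonneg v)]
    have h2 : (c * v) ^ 2 = ε ^ 2 * L ^ 2 * (k * v) ^ 2 := by
      rw [hcdef, show (ε * L * |k| * v) ^ 2 = ε ^ 2 * L ^ 2 * |k| ^ 2 * v ^ 2 from by ring,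
        sq_abs]
      ring
    simp only
    rw [h1, h2]
    have hvb : (0:ℝ) < 1 + |v| ^ β := by positivity
    have hdenpos : (0:ℝ) < 1 + ε ^ 2 * L ^ 2 * (k * v) ^ 2 := by positivity
    field_simp
  have step1 : (∫ v : ℝ,
      L ^ 2 * (k * v) ^ 2 / (1 + ε ^ 2 * L ^ 2 * (k * v) ^ 2) * (m / (1 + |v| ^ β))) =
      c⁻¹ * (c ^ β / ε ^ 2 *
        ∫ w : ℝ, m / (c ^ β + |w| ^ β) * (w ^ 2 / (1 + w ^ 2))) := by
    rw [show (fun v : ℝ =>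
        L ^ 2 * (k * v) ^ 2 / (1 + ε ^ 2 * L ^ 2 * (k * v) ^ 2) * (m / (1 + |v| ^ β))) =
        fun v : ℝ => (fun w : ℝ =>
          c ^ β / ε ^ 2 * (m / (c ^ β + |w| ^ β) * (w ^ 2 / (1 + w ^ 2)))) (c * v)
      from funext hfeq]
    rw [MeasureTheory.Measure.integral_comp_mul_left
      (fun w : ℝ => c ^ β / ε ^ 2 * (m / (c ^ β + |w| ^ β) * (w ^ 2 / (1 + w ^ 2)))) c]
    rw [MeasureTheory.integral_const_mul, smul_eq_mul, abs_of_pos (inv_pos.2 hc0)]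
  -- scalar identities
  have e1 : c ^ β * c⁻¹ = c ^ (β - 1) := by
    rw [← Real.rpow_neg_one c, ← Real.rpow_add hc0, ← sub_eq_add_neg]
  have e2 : ε ^ (2 - (β - 1)) / ε ^ 2 = ε ^ (-(β - 1)) := by
    rw [show (ε:ℝ) ^ 2 = ε ^ ((2:ℕ):ℝ) from (Real.rpow_natCast ε 2).symm,
      ← Real.rpow_sub hε0]
    norm_num
  have e3 : c ^ (β - 1) = ε ^ (β - 1) * (L * |k|) ^ (β - 1) := by
    rw [show c = ε * (L * |k|) from by rw [hcdef]; ring,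
      Real.mul_rpow hε0.le (by positivity)]
  have e4 : ε ^ (-(β - 1)) * ε ^ (β - 1) = 1 := by
    rw [← Real.rpow_add hε0]
    norm_num
  have scalar : ε ^ (2 - (β - 1)) * c⁻¹ * (c ^ β / ε ^ 2) = (L * |k|) ^ (β - 1) := by
    calc ε ^ (2 - (β - 1)) * c⁻¹ * (c ^ β / ε ^ 2)
        = ε ^ (2 - (β - 1)) / ε ^ 2 * (c ^ β * c⁻¹) := by ring
      _ = ε ^ (-(β - 1)) * c ^ (β - 1) := by rw [e1, e2]
      _ = ε ^ (-(β - 1)) * ε ^ (β - 1) * (L * |k|) ^ (β - 1) := by rw [e3]; ring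
      _ = (L * |k|) ^ (β - 1) := by rw [e4, one_mul]
  show (L * |k|) ^ (β - 1) *
      (∫ w : ℝ, m / (c ^ β + |w| ^ β) * (w ^ 2 / (1 + w ^ 2))) =
      ε ^ (2 - (β - 1)) * ∫ v : ℝ,
        L ^ 2 * (k * v) ^ 2 / (1 + ε ^ 2 * L ^ 2 * (k * v) ^ 2) * (m / (1 + |v| ^ β))
  rw [step1, ← scalar]
  ring
end

section
/- (Lipschitz stability of the discrete Duhamel recursion.) Consider the recursion ρ^{n+1} = A^{n+1} + Σ_{j=0}^n ((c_j − b_j) ρ^{n+1−j} + b_j ρ^{n−j}) in ℂ, where the complex weights satisfy |c_0 − b_0| ≤ θ < 1 and Σ_{j=0}^∞ (|c_j − b_j| + |b_j|) ≤ 1. Then for two solutions ρ, ρ̃ with the same weights and source terms A, Ã, one has sup_{0≤n≤N} |ρ^n − ρ̃^n| ≤ (1−θ)^{-1} · N · sup_n |A^n − Ã^n| · C for some constant C depending only on θ, provided ρ^0 = ρ̃^0. -/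
open Finset

set_option maxHeartbeats 800000 in
/-- Lipschitz stability of the discrete Duhamel recursion
`ρ^{n+1} = A^{n+1} + Σ_{j=0}^n ((c_j−b_j)ρ^{n+1−j} + b_j ρ^{n−j})`:
if `|c₀−b₀| ≤ θ < 1` and `Σ_j (|c_j−b_j| + |b_j|) ≤ 1`, then two solutions with
the same weights and sources `A, A2` satisfy
`sup_{n≤N} |ρ^n − ρ2^n| ≤ (1−θ)⁻¹ N C sup_{n≤N} |A^n − A2^n|`
for a constant `C` depending only on `θ`. -/
theorem discrete_duhamel_stability (θ : ℝ) (hθ0 : 0 ≤ θ) (hθ : θ < 1) :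
    ∃ C : ℝ, 0 < C ∧
      ∀ (b c A A2 ρ ρ2 : ℕ → ℂ),
        ‖c 0 - b 0‖ ≤ θ →
        Summable (fun j => ‖c j - b j‖ + ‖b j‖) →
        (∑' j : ℕ, (‖c j - b j‖ + ‖b j‖)) ≤ 1 →
        (∀ n : ℕ, ρ (n + 1) = A (n + 1) +
          ∑ j ∈ range (n + 1), ((c j - b j) * ρ (n + 1 - j) + b j * ρ (n - j))) →
        (∀ n : ℕ, ρ2 (n + 1) = A2 (n + 1) +
          ∑ j ∈ range (n + 1), ((c j - b j) * ρ2 (n + 1 - j) + b j * ρ2 (n - j))) →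
        ρ 0 = ρ2 0 →
        ∀ (N : ℕ) (δ : ℝ), (∀ n ≤ N, ‖A n - A2 n‖ ≤ δ) →
          ∀ n ≤ N, ‖ρ n - ρ2 n‖ ≤ (1 - θ)⁻¹ * N * δ * C := by
  refine ⟨1, one_pos, ?_⟩
  intro b c A A2 ρ ρ2 ha hs hts hρ hρ2 h0 N δ hδ
  have hδ0 : 0 ≤ δ := le_trans (norm_nonneg _) (hδ 0 (Nat.zero_le N))
  have h1θ : 0 < 1 - θ := by linarith
  have hinv : 0 ≤ (1 - θ)⁻¹ := inv_nonneg.mpr h1θ.le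
  set a := ‖c 0 - b 0‖ with haa
  have ha0 : 0 ≤ a := norm_nonneg _
  have h1a : 0 < 1 - a := by linarith
  have key : ∀ n, n ≤ N → ‖ρ n - ρ2 n‖ ≤ (1 - θ)⁻¹ * n * δ := by
    intro n
    induction n using Nat.strong_induction_on with
    | _ n ih =>
      intro hnN
      match n with
      | 0 => simp [h0]
      | Nat.succ n =>
        set M : ℝ := (1 - θ)⁻¹ * n * δ with hMdef
        have hM0 : 0 ≤ M := by positivity
        have hM : ∀ k ≤ n, ‖ρ k - ρ2 k‖ ≤ M := by
          intro k hk
          have h1 : ‖ρ k - ρ2 k‖ ≤ (1 - θ)⁻¹ * k * δ :=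
            ih k (Nat.lt_succ_of_le hk) (le_trans (Nat.le_succ_of_le hk) hnN)
          have h2 : (k : ℝ) ≤ n := by exact_mod_cast hk
          have h3 := mul_le_mul_of_nonneg_right
            (mul_le_mul_of_nonneg_left h2 hinv) hδ0
          calc ‖ρ k - ρ2 k‖ ≤ (1 - θ)⁻¹ * k * δ := h1
            _ ≤ M := by rw [hMdef]; linarith
        -- recursion for the difference
        have hrec : ρ (n+1) - ρ2 (n+1) = (A (n+1) - A2 (n+1)) +
            ∑ j ∈ range (n+1), ((c j - b j) * (ρ (n+1-j) - ρ2 (n+1-j))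
              + b j * (ρ (n-j) - ρ2 (n-j))) := by
          rw [hρ n, hρ2 n, add_sub_add_comm, ← Finset.sum_sub_distrib]
          congr 1
          apply Finset.sum_congr rfl
          intro j _
          ring
        have hrec2 : (1 - (c 0 - b 0)) * (ρ (n+1) - ρ2 (n+1)) = (A (n+1) - A2 (n+1)) +
            (∑ j ∈ range n, (c (j+1) - b (j+1)) * (ρ (n-j) - ρ2 (n-j))
              + ∑ j ∈ range (n+1), b j * (ρ (n-j) - ρ2 (n-j))) := by
          have h := hrec
          rw [Finset.sum_add_distrib,
            Finset.sum_range_succ' (fun j => (c j - b j) * (ρ (n+1-j) - ρ2 (n+1-j)))] at h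
          simp only [Nat.succ_sub_succ, Nat.sub_zero] at h
          linear_combination h
        -- bound the sums
        set S : ℝ := ∑ j ∈ range n, ‖c (j+1) - b (j+1)‖
            + ∑ j ∈ range (n+1), ‖b j‖ with hSdef
        have hpartial : ∑ j ∈ range (n+1), (‖c j - b j‖ + ‖b j‖) ≤ 1 :=
          le_trans (Summable.sum_le_tsum (range (n+1)) (fun j _ => by positivity) hs) hts
        have hsplit : ∑ j ∈ range (n+1), (‖c j - b j‖ + ‖b j‖)
            = a + S := by
          rw [hSdef, Finset.sum_add_distrib,
            Finset.sum_range_succ' (fun j => ‖c j - b j‖)]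
          ring
        have hS : S ≤ 1 - a := by rw [hsplit] at hpartial; linarith
        -- bound the two sums by M times coefficient sums
        have hb1 : ‖∑ j ∈ range n, (c (j+1) - b (j+1)) * (ρ (n-j) - ρ2 (n-j))‖
            ≤ (∑ j ∈ range n, ‖c (j+1) - b (j+1)‖) * M := by
          refine le_trans (norm_sum_le _ _) ?_
          rw [Finset.sum_mul]
          apply Finset.sum_le_sum
          intro j _
          rw [norm_mul]
          exact mul_le_mul_of_nonneg_left (hM _ (Nat.sub_le _ _)) (norm_nonneg _)
        have hb2 : ‖∑ j ∈ range (n+1), b j * (ρ (n-j) - ρ2 (n-j))‖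
            ≤ (∑ j ∈ range (n+1), ‖b j‖) * M := by
          refine le_trans (norm_sum_le _ _) ?_
          rw [Finset.sum_mul]
          apply Finset.sum_le_sum
          intro j _
          rw [norm_mul]
          exact mul_le_mul_of_nonneg_left (hM _ (Nat.sub_le _ _)) (norm_nonneg _)
        have hrhs : ‖(1 - (c 0 - b 0)) * (ρ (n+1) - ρ2 (n+1))‖ ≤ δ + (1 - a) * M := by
          rw [hrec2]
          have t1 := norm_add_le (A (n+1) - A2 (n+1))
            (∑ j ∈ range n, (c (j+1) - b (j+1)) * (ρ (n-j) - ρ2 (n-j))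
              + ∑ j ∈ range (n+1), b j * (ρ (n-j) - ρ2 (n-j)))
          have t2 := norm_add_le
            (∑ j ∈ range n, (c (j+1) - b (j+1)) * (ρ (n-j) - ρ2 (n-j)))
            (∑ j ∈ range (n+1), b j * (ρ (n-j) - ρ2 (n-j)))
          have t3 := hδ (n+1) hnN
          have t4 : S * M ≤ (1 - a) * M := mul_le_mul_of_nonneg_right hS hM0
          have hSM : (∑ j ∈ range n, ‖c (j+1) - b (j+1)‖) * M
              + (∑ j ∈ range (n+1), ‖b j‖) * M = S * M := by
            rw [hSdef]; ring
          linarith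
        -- lower bound on the LHS
        have hlhs : (1 - a) * ‖ρ (n+1) - ρ2 (n+1)‖
            ≤ ‖(1 - (c 0 - b 0)) * (ρ (n+1) - ρ2 (n+1))‖ := by
          rw [norm_mul]
          apply mul_le_mul_of_nonneg_right _ (norm_nonneg _)
          have h1 : ‖(1:ℂ)‖ - ‖c 0 - b 0‖ ≤ ‖1 - (c 0 - b 0)‖ := norm_sub_norm_le _ _
          simpa [← haa] using h1
        have hE : ‖ρ (n+1) - ρ2 (n+1)‖ ≤ (1 - a)⁻¹ * δ + M := by
          have h5 := le_trans hlhs hrhs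
          rw [← sub_nonneg]
          have h6 : 0 < (1 - a)⁻¹ := inv_pos.mpr h1a
          have h7 : (1 - a)⁻¹ * (1 - a) = 1 := inv_mul_cancel₀ h1a.ne'
          nlinarith [mul_le_mul_of_nonneg_left h5 h6.le]
        calc ‖ρ (n+1) - ρ2 (n+1)‖ ≤ (1 - a)⁻¹ * δ + M := hE
          _ ≤ (1 - θ)⁻¹ * δ + M := by
              have h8 : (1 - a)⁻¹ ≤ (1 - θ)⁻¹ := by
                apply inv_anti₀ h1θ; linarith
              nlinarith
          _ = (1 - θ)⁻¹ * ((n : ℝ) + 1) * δ := by rw [hMdef]; ring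
          _ = (1 - θ)⁻¹ * ((n + 1 : ℕ) : ℝ) * δ := by push_cast; ring
  intro n hn
  have h2 : (n : ℝ) ≤ N := by exact_mod_cast hn
  have h3 := mul_le_mul_of_nonneg_right (mul_le_mul_of_nonneg_left h2 hinv) hδ0
  calc ‖ρ n - ρ2 n‖ ≤ (1 - θ)⁻¹ * n * δ := key n hn
    _ ≤ (1 - θ)⁻¹ * N * δ * 1 := by rw [mul_one]; linarith
end

section
/- (Piecewise-linear interpolation error for the Duhamel convolution.) Let g : [0,T] → ℂ be C² with |g''| ≤ L, let K be a finite positive measure on (0,∞), and define for t_{n+1} = (n+1)Δt the exact convolution E = ∫₀^{t_{n+1}/ε^α} K(ds) g(t_{n+1} − ε^α s) and its approximation Ẽ obtained by replacing g(t_{n+1} − ε^α s) on each interval s ∈ [t_j/ε^α, t_{j+1}/ε^α] by its linear interpolant between g(t_{n+1−j}) and g(t_{n−j}). Then |E − Ẽ| ≤ (L/8) Δt² K((0, t_{n+1}/ε^α]) ≤ (L/8) Δt² K((0,∞)), uniformly in ε. -/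
open MeasureTheory Finset

lemma taylor2 (g : ℝ → ℂ) (hg : ContDiff ℝ 2 g) (M x y : ℝ)
    (hM : ∀ u ∈ Set.uIcc x y, ‖deriv (deriv g) u‖ ≤ M) :
    ‖g y - g x - (y - x) • deriv g x‖ ≤ M / 2 * (y - x) ^ 2 := by
  have hM0 : 0 ≤ M := le_trans (norm_nonneg _) (hM x (Set.left_mem_uIcc))
  have hg1 : Differentiable ℝ g := hg.differentiable (by norm_num)
  have hgd : ContDiff ℝ 1 (deriv g) := by
    have := (contDiff_succ_iff_deriv (n := 1)).mp (by exact_mod_cast hg)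
    exact this.2.2
  have hg2 : Differentiable ℝ (deriv g) := hgd.differentiable one_ne_zero
  have hφ : ∀ u : ℝ, HasDerivAt (fun u : ℝ => g (x + u * (y - x)))
      ((y - x) • deriv g (x + u * (y - x))) u := by
    intro u
    have h1 : HasDerivAt (fun u : ℝ => x + u * (y - x)) (y - x) u := by
      simpa using ((hasDerivAt_id u).mul_const (y - x)).const_add x
    exact ((hg1 _).hasDerivAt).scomp u h1
  have hcont : Continuous fun u : ℝ => (y - x) • deriv g (x + u * (y - x)) :=
    (hgd.continuous.comp (f := fun u : ℝ => x + u * (y - x)) (by continuity)).const_smul (y - x)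
  have hint1 : IntervalIntegrable (fun u : ℝ => (y - x) • deriv g (x + u * (y - x)))
      volume 0 1 := hcont.intervalIntegrable 0 1
  have hFTC : (∫ u in (0:ℝ)..1, (y - x) • deriv g (x + u * (y - x))) = g y - g x := by
    rw [intervalIntegral.integral_eq_sub_of_hasDerivAt (fun u _ => hφ u) hint1]
    norm_num
  have hsub : (∫ u in (0:ℝ)..1,
      ((y - x) • deriv g (x + u * (y - x)) - (y - x) • deriv g x))
      = g y - g x - (y - x) • deriv g x := by
    rw [intervalIntegral.integral_sub hint1 intervalIntegrable_const, hFTC,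
      intervalIntegral.integral_const]
    norm_num
  rw [← hsub]
  have hbd : ∀ u ∈ Set.Ioc (0:ℝ) 1,
      ‖(y - x) • deriv g (x + u * (y - x)) - (y - x) • deriv g x‖
        ≤ M * (y - x) ^ 2 * u := by
    intro u hu
    set z := x + u * (y - x) with hz
    have hzmem : z ∈ Set.uIcc x y := by
      rw [← segment_eq_uIcc]
      exact ⟨1 - u, u, by linarith [hu.2], le_of_lt hu.1, by linarith [hu.2], by
        simp [hz]; ring⟩
    have hmvt : ‖deriv g z - deriv g x‖ ≤ M * ‖z - x‖ :=
      (convex_uIcc x y).norm_image_sub_le_of_norm_deriv_le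
        (fun v _ => (hg2 v)) hM Set.left_mem_uIcc hzmem
    have hzx : ‖z - x‖ = u * |y - x| := by
      simp [hz, abs_mul, abs_of_pos hu.1]
    rw [← smul_sub, norm_smul]
    calc ‖y - x‖ * ‖deriv g z - deriv g x‖ ≤ ‖y - x‖ * (M * ‖z - x‖) := by
          exact mul_le_mul_of_nonneg_left hmvt (norm_nonneg _)
      _ = M * (y - x) ^ 2 * u := by
          rw [hzx, Real.norm_eq_abs]
          rw [show |y - x| * (M * (u * |y - x|)) = M * (|y - x| * |y - x|) * u by ring,
            ← abs_mul, abs_mul_self]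
          ring_nf
  have hboundint : IntervalIntegrable (fun u : ℝ => M * (y - x) ^ 2 * u) volume 0 1 :=
    (continuous_const.mul continuous_id).intervalIntegrable 0 1
  calc ‖∫ u in (0:ℝ)..1,
        ((y - x) • deriv g (x + u * (y - x)) - (y - x) • deriv g x)‖
      ≤ |∫ u in (0:ℝ)..1, M * (y - x) ^ 2 * u| := by
        apply intervalIntegral.norm_integral_le_abs_of_norm_le _ hboundint
        · filter_upwards [ae_restrict_mem measurableSet_uIoc] with u hu
          exact hbd u (by simpa [Set.uIoc_of_le (zero_le_one)] using hu)
    _ = M / 2 * (y - x) ^ 2 := by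
        rw [intervalIntegral.integral_const_mul, integral_id]
        rw [abs_of_nonneg (by positivity)]
        ring


lemma interp_err (g : ℝ → ℂ) (hg : ContDiff ℝ 2 g) (M a b t : ℝ) (hab : a < b)
    (hM : ∀ u ∈ Set.Icc a b, ‖deriv (deriv g) u‖ ≤ M)
    (hat : a ≤ t) (htb : t ≤ b) :
    ‖g t - (((t - a) / (b - a)) • g b + ((b - t) / (b - a)) • g a)‖
      ≤ M / 2 * ((t - a) * (b - t)) := by
  have hba : (0:ℝ) < b - a := by linarith
  have hMb : ∀ u ∈ Set.uIcc t b, ‖deriv (deriv g) u‖ ≤ M := by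
    intro u hu
    apply hM
    rw [Set.uIcc_of_le htb] at hu
    exact ⟨le_trans hat hu.1, hu.2⟩
  have hMa : ∀ u ∈ Set.uIcc t a, ‖deriv (deriv g) u‖ ≤ M := by
    intro u hu
    apply hM
    rw [Set.uIcc_of_ge hat] at hu
    exact ⟨hu.1, le_trans hu.2 htb⟩
  have hRb := taylor2 g hg M t b hMb
  have hRa := taylor2 g hg M t a hMa
  set wB := (t - a) / (b - a) with hwB
  set wA := (b - t) / (b - a) with hwA
  have hwB0 : 0 ≤ wB := div_nonneg (by linarith) (by linarith)
  have hwA0 : 0 ≤ wA := div_nonneg (by linarith) (by linarith)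
  have key : g t - (wB • g b + wA • g a)
      = -(wB • (g b - g t - (b - t) • deriv g t)
          + wA • (g a - g t - (a - t) • deriv g t)) := by
    have h1 : wB + wA = 1 := by rw [hwB, hwA]; field_simp; ring
    have h2 : wB * (b - t) + wA * (a - t) = 0 := by rw [hwB, hwA]; field_simp; ring
    have h1' : (wB : ℂ) + (wA : ℂ) = 1 := by exact_mod_cast congrArg (Complex.ofReal) h1
    have h2' : (wB : ℂ) * ((b : ℂ) - t) + (wA : ℂ) * ((a : ℂ) - t) = 0 := by
      exact_mod_cast congrArg (Complex.ofReal) h2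
    simp only [Complex.real_smul]
    push_cast
    linear_combination (-(g t)) * h1' - deriv g t * h2'
  rw [key, norm_neg]
  calc ‖wB • (g b - g t - (b - t) • deriv g t) + wA • (g a - g t - (a - t) • deriv g t)‖
      ≤ wB * ‖g b - g t - (b - t) • deriv g t‖ + wA * ‖g a - g t - (a - t) • deriv g t‖ := by
        refine le_trans (norm_add_le _ _) ?_
        rw [norm_smul, norm_smul, Real.norm_eq_abs, Real.norm_eq_abs,
          abs_of_nonneg hwB0, abs_of_nonneg hwA0]
    _ ≤ wB * (M / 2 * (b - t) ^ 2) + wA * (M / 2 * (a - t) ^ 2) := by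
        gcongr
    _ = M / 2 * ((t - a) * (b - t)) := by
        rw [hwB, hwA]
        field_simp
        ring


lemma amgm_aux (L A B Δ : ℝ) (hL : 0 ≤ L) (hA : 0 ≤ A) (hB : 0 ≤ B) (hAB : A + B = Δ) :
    L / 2 * (A * B) ≤ L / 8 * Δ ^ 2 := by
  subst hAB; nlinarith [mul_nonneg hL (sq_nonneg (A - B))]

lemma Ioc_biUnion_aux (Δ' : ℝ) (h : 0 ≤ Δ') (m : ℕ) :
    (⋃ j ∈ range m, Set.Ioc ((j : ℝ) * Δ') (((j : ℝ) + 1) * Δ'))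
      = Set.Ioc 0 ((m : ℝ) * Δ') := by
  induction m with
  | zero => simp
  | succ m ih =>
    rw [range_add_one, Finset.set_biUnion_insert, ih, Set.union_comm,
      Set.Ioc_union_Ioc_eq_Ioc (by positivity) (by nlinarith)]
    push_cast
    ring_nf

/-- Piecewise-linear interpolation error for the Duhamel convolution: for a
`C²` function `g` with `|g''| ≤ L` on `[0,T]` and a finite positive measure `K`,
replacing `g(t_{n+1} − ε^α s)` by its linear interpolant on each interval
`[t_j/ε^α, t_{j+1}/ε^α]` produces an error at most
`(L/8) Δt² K((0, t_{n+1}/ε^α]) ≤ (L/8) Δt² K((0,∞))`, uniformly in `ε`. -/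
theorem duhamel_interpolation_error
    (T Δt ε α L : ℝ) (hT : 0 < T) (hΔt : 0 < Δt) (hε : 0 < ε)
    (g : ℝ → ℂ) (hg : ContDiff ℝ 2 g)
    (hL : ∀ t ∈ Set.Icc (0 : ℝ) T, ‖deriv (deriv g) t‖ ≤ L)
    (K : Measure ℝ) [IsFiniteMeasure K]
    (n : ℕ) (hn : ((n : ℝ) + 1) * Δt ≤ T) :
    ‖(∫ s in Set.Ioc (0 : ℝ) (((n : ℝ) + 1) * Δt / ε ^ α),
          g (((n : ℝ) + 1) * Δt - ε ^ α * s) ∂K) -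
        ∑ j ∈ range (n + 1),
          ∫ s in Set.Ioc ((j : ℝ) * Δt / ε ^ α) (((j : ℝ) + 1) * Δt / ε ^ α),
            (((((j : ℝ) + 1) * Δt - ε ^ α * s) / Δt) • g (((n : ℝ) + 1 - (j : ℝ)) * Δt) +
             ((ε ^ α * s - (j : ℝ) * Δt) / Δt) • g (((n : ℝ) - (j : ℝ)) * Δt)) ∂K‖ ≤
      L / 8 * Δt ^ 2 * (K (Set.Ioc (0 : ℝ) (((n : ℝ) + 1) * Δt / ε ^ α))).toReal ∧
    L / 8 * Δt ^ 2 * (K (Set.Ioc (0 : ℝ) (((n : ℝ) + 1) * Δt / ε ^ α))).toReal ≤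
      L / 8 * Δt ^ 2 * (K (Set.Ioi (0 : ℝ))).toReal := by
  have hc : (0 : ℝ) < ε ^ α := Real.rpow_pos_of_pos hε α
  have hL0 : 0 ≤ L := le_trans (norm_nonneg _) (hL 0 ⟨le_rfl, le_of_lt hT⟩)
  constructor
  · -- main estimate
    have hspl : Set.Ioc (0 : ℝ) (((n : ℝ) + 1) * Δt / ε ^ α)
        = ⋃ j ∈ range (n + 1),
            Set.Ioc ((j : ℝ) * Δt / ε ^ α) (((j : ℝ) + 1) * Δt / ε ^ α) := by
      have := (Ioc_biUnion_aux (Δt / ε ^ α) (by positivity) (n + 1)).symm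
      simp only [mul_div_assoc]
      push_cast at this
      convert this using 2
    have hdisj : (↑(range (n + 1)) : Set ℕ).Pairwise
        (Function.onFun Disjoint fun j : ℕ =>
          Set.Ioc ((j : ℝ) * Δt / ε ^ α) (((j : ℝ) + 1) * Δt / ε ^ α)) := by
      intro i _ j _ hij
      rw [Function.onFun, Set.Ioc_disjoint_Ioc]
      rcases hij.lt_or_gt with h | h
      · have : ((i : ℝ) + 1) ≤ (j : ℝ) := by exact_mod_cast h
        refine le_trans (min_le_left _ _) (le_trans ?_ (le_max_right _ _))
        gcongr
      · have : ((j : ℝ) + 1) ≤ (i : ℝ) := by exact_mod_cast h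
        refine le_trans (min_le_right _ _) (le_trans ?_ (le_max_left _ _))
        gcongr
    have hfc : Continuous fun s : ℝ => g (((n : ℝ) + 1) * Δt - ε ^ α * s) :=
      hg.continuous.comp (by continuity)
    have hfint : ∀ j : ℕ, IntegrableOn (fun s : ℝ => g (((n : ℝ) + 1) * Δt - ε ^ α * s))
        (Set.Ioc ((j : ℝ) * Δt / ε ^ α) (((j : ℝ) + 1) * Δt / ε ^ α)) K :=
      fun j => hfc.integrableOn_Ioc
    have hpc : ∀ j : ℕ, Continuous fun s : ℝ =>
        (((((j : ℝ) + 1) * Δt - ε ^ α * s) / Δt) • g (((n : ℝ) + 1 - (j : ℝ)) * Δt) +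
          ((ε ^ α * s - (j : ℝ) * Δt) / Δt) • g (((n : ℝ) - (j : ℝ)) * Δt)) := by
      intro j
      exact (((continuous_const.sub (continuous_const.mul continuous_id)).div_const _).smul
          continuous_const).add
        ((((continuous_const.mul continuous_id).sub continuous_const).div_const _).smul
          continuous_const)
    have hpint : ∀ j : ℕ, IntegrableOn (fun s : ℝ =>
        (((((j : ℝ) + 1) * Δt - ε ^ α * s) / Δt) • g (((n : ℝ) + 1 - (j : ℝ)) * Δt) +
          ((ε ^ α * s - (j : ℝ) * Δt) / Δt) • g (((n : ℝ) - (j : ℝ)) * Δt)))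
        (Set.Ioc ((j : ℝ) * Δt / ε ^ α) (((j : ℝ) + 1) * Δt / ε ^ α)) K :=
      fun j => (hpc j).integrableOn_Ioc
    rw [hspl, integral_biUnion_finset (range (n + 1)) (fun j _ => measurableSet_Ioc)
      hdisj (fun j _ => hfint j), ← Finset.sum_sub_distrib]
    refine le_trans (norm_sum_le _ _) ?_
    have hterm : ∀ j ∈ range (n + 1),
        ‖(∫ s in Set.Ioc ((j : ℝ) * Δt / ε ^ α) (((j : ℝ) + 1) * Δt / ε ^ α),
            g (((n : ℝ) + 1) * Δt - ε ^ α * s) ∂K) -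
          ∫ s in Set.Ioc ((j : ℝ) * Δt / ε ^ α) (((j : ℝ) + 1) * Δt / ε ^ α),
            (((((j : ℝ) + 1) * Δt - ε ^ α * s) / Δt) • g (((n : ℝ) + 1 - (j : ℝ)) * Δt) +
             ((ε ^ α * s - (j : ℝ) * Δt) / Δt) • g (((n : ℝ) - (j : ℝ)) * Δt)) ∂K‖
          ≤ L / 8 * Δt ^ 2 *
            (K (Set.Ioc ((j : ℝ) * Δt / ε ^ α) (((j : ℝ) + 1) * Δt / ε ^ α))).toReal := by
      intro j hj
      have hjn : (j : ℝ) ≤ (n : ℝ) := by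
        exact_mod_cast Nat.lt_succ_iff.mp (mem_range.mp hj)
      rw [← integral_sub (hfint j) (hpint j)]
      apply norm_setIntegral_le_of_norm_le_const_ae (measure_lt_top _ _)
      filter_upwards [ae_restrict_mem measurableSet_Ioc] with s hs
      have hcs1 : (j : ℝ) * Δt < ε ^ α * s := by
        have := (div_lt_iff₀ hc).mp hs.1; linarith [mul_comm s (ε ^ α)]
      have hcs2 : ε ^ α * s ≤ ((j : ℝ) + 1) * Δt := by
        have := (le_div_iff₀ hc).mp hs.2; linarith [mul_comm s (ε ^ α)]
      have hd1 : ((n : ℝ) + 1 - (j : ℝ)) * Δt - ((n : ℝ) - (j : ℝ)) * Δt = Δt := by ring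
      have hd2 : ((n : ℝ) + 1) * Δt - ((n : ℝ) - (j : ℝ)) * Δt = ((j : ℝ) + 1) * Δt := by ring
      have hd3 : ((n : ℝ) + 1) * Δt - ((n : ℝ) + 1 - (j : ℝ)) * Δt = (j : ℝ) * Δt := by ring
      have hj0 : (0 : ℝ) ≤ (j : ℝ) := Nat.cast_nonneg j
      have ha0 : (0 : ℝ) ≤ ((n : ℝ) - (j : ℝ)) * Δt := mul_nonneg (by linarith) hΔt.le
      have hbT : ((n : ℝ) + 1 - (j : ℝ)) * Δt ≤ T := by nlinarith
      have key := interp_err g hg L (((n : ℝ) - (j : ℝ)) * Δt) (((n : ℝ) + 1 - (j : ℝ)) * Δt)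
        (((n : ℝ) + 1) * Δt - ε ^ α * s) (by linarith)
        (fun u hu => hL u ⟨by linarith [hu.1], by linarith [hu.2]⟩)
        (by linarith) (by linarith)
      have e1 : ((((j : ℝ) + 1) * Δt - ε ^ α * s) / Δt)
          = ((((n : ℝ) + 1) * Δt - ε ^ α * s) - ((n : ℝ) - (j : ℝ)) * Δt) /
            ((((n : ℝ) + 1 - (j : ℝ)) * Δt) - ((n : ℝ) - (j : ℝ)) * Δt) := by
        rw [show (((n : ℝ) + 1 - (j : ℝ)) * Δt) - ((n : ℝ) - (j : ℝ)) * Δt = Δt by ring]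
        congr 1; ring
      have e2 : ((ε ^ α * s - (j : ℝ) * Δt) / Δt)
          = ((((n : ℝ) + 1 - (j : ℝ)) * Δt) - (((n : ℝ) + 1) * Δt - ε ^ α * s)) /
            ((((n : ℝ) + 1 - (j : ℝ)) * Δt) - ((n : ℝ) - (j : ℝ)) * Δt) := by
        rw [show (((n : ℝ) + 1 - (j : ℝ)) * Δt) - ((n : ℝ) - (j : ℝ)) * Δt = Δt by ring]
        congr 1; ring
      rw [e1, e2]
      refine le_trans key (amgm_aux L _ _ _ hL0 (by linarith) (by linarith) (by ring))
    refine le_trans (Finset.sum_le_sum hterm) ?_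
    rw [← Finset.mul_sum, ← ENNReal.toReal_sum (fun j _ => measure_ne_top K _),
      ← measure_biUnion_finset hdisj (fun j _ => measurableSet_Ioc)]
  · -- trivial monotonicity
    have : K (Set.Ioc (0 : ℝ) (((n : ℝ) + 1) * Δt / ε ^ α)) ≤ K (Set.Ioi 0) :=
      measure_mono Set.Ioc_subset_Ioi_self
    have h2 : (K (Set.Ioc (0 : ℝ) (((n : ℝ) + 1) * Δt / ε ^ α))).toReal
        ≤ (K (Set.Ioi (0 : ℝ))).toReal := ENNReal.toReal_mono (measure_ne_top K _) this
    have hC : 0 ≤ L / 8 * Δt ^ 2 := by positivity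
    exact mul_le_mul_of_nonneg_left h2 hC
end
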